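/- (Achievability of the SPIR capacity.) For all integers K ≥ 2 and N ≥ 2, there exists a zero-error SPIR scheme with message length L = N − 1 bits, in which each answer A_n^{[k]} is a single bit (so the total download is D = N and the rate is (N−1)/N = 1 − 1/N), and in which the common randomness S is a single uniform bit (so H(S) = 1 bit and ρ = H(S)/L = 1/(N−1)). -/

import Mathlib

open Finset

attribute [local instance] Classical.propDecidable

/-- Probability that the random variable `X` takes the value `a`, on a finite
sample space `Ω` with probability mass function `p`. -/
noncomputable def prob {Ω α : Type*} [Fintype Ω] (p : Ω → ℝ) (X : Ω → α) (a : α) : ℝ :=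
  ∑ ω : Ω, if X ω = a then p ω else 0

/-- Shannon entropy (in bits) of the random variable `X`. -/
noncomputable def ent {Ω α : Type*} [Fintype Ω] [Fintype α] (p : Ω → ℝ) (X : Ω → α) : ℝ :=
  - ∑ a : α, prob p X a * Real.logb 2 (prob p X a)

/-- Conditional Shannon entropy (in bits) `H(X | Y)`. -/
noncomputable def condEnt {Ω α β : Type*} [Fintype Ω] [Fintype α] [Fintype β]
    (p : Ω → ℝ) (X : Ω → α) (Y : Ω → β) : ℝ :=
  ent p (fun ω => (X ω, Y ω)) - ent p Y

/-- Shannon mutual information (in bits) `I(X ; Y)`. -/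
noncomputable def mutInfo {Ω α β : Type*} [Fintype Ω] [Fintype α] [Fintype β]
    (p : Ω → ℝ) (X : Ω → α) (Y : Ω → β) : ℝ :=
  ent p X + ent p Y - ent p (fun ω => (X ω, Y ω))

/-- `X` and `Y` are identically distributed. -/
def IdentDist {Ω α : Type*} [Fintype Ω] (p : Ω → ℝ) (X Y : Ω → α) : Prop :=
  ∀ a : α, prob p X a = prob p Y a

/-- `X` is uniformly distributed on `α`. -/
def Unif {Ω α : Type*} [Fintype Ω] [Fintype α] (p : Ω → ℝ) (X : Ω → α) : Prop :=
  ∀ a : α, prob p X a = 1 / (Fintype.card α : ℝ)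

/-- A zero-error SPIR scheme with `K` messages of `L = N − 1` bits each and `N` databases,
in which each answer is a *single bit* (so the total download is `D = N` bits and the rate
is `(N−1)/N = 1 − 1/N`) and the common randomness `S` is a single bit. -/
structure OneBitAnswerSPIR (K N : ℕ) where
  /-- the finite sample space -/
  Ω : Type
  [instΩ : Fintype Ω]
  /-- the probability mass function -/
  p : Ω → ℝ
  p_nonneg : ∀ ω, 0 ≤ p ω
  p_sum : ∑ ω : Ω, p ω = 1
  /-- value type of the user randomness -/
  𝓕 : Type
  [inst𝓕 : Fintype 𝓕]
  /-- value types of the queries -/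
  𝓠 : Fin N → Type
  [inst𝓠 : ∀ n, Fintype (𝓠 n)]
  /-- the messages, each of `L = N − 1` bits -/
  W : Fin K → Ω → (Fin (N - 1) → ZMod 2)
  /-- the common randomness: a single bit -/
  S : Ω → ZMod 2
  /-- the user randomness -/
  F : Ω → 𝓕
  /-- the queries -/
  Q : ∀ (_ : Fin K) (n : Fin N), Ω → 𝓠 n
  /-- the answers: a single bit each -/
  A : Fin K → Fin N → Ω → ZMod 2
  /-- each message is uniformly distributed on the set of `(N−1)`-bit strings -/
  hWunif : ∀ k, Unif p (W k)
  /-- the messages, the common randomness and the user randomness are mutually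
  independent -/
  hIndep : ∀ (w : ∀ _ : Fin K, Fin (N - 1) → ZMod 2) (s : ZMod 2) (f : 𝓕),
    prob p (fun ω => ((fun k => W k ω), S ω, F ω)) (w, s, f)
      = (∏ k, prob p (W k) (w k)) * prob p S s * prob p F f
  /-- each query is a deterministic function of `F` -/
  hQ : ∀ k n, ∃ g : 𝓕 → 𝓠 n, ∀ ω, Q k n ω = g (F ω)
  /-- each answer is a deterministic function of the query, the messages and `S` -/
  hA : ∀ k n, ∃ g : 𝓠 n → (∀ _ : Fin K, Fin (N - 1) → ZMod 2) → ZMod 2 → ZMod 2,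
    ∀ ω, A k n ω = g (Q k n ω) (fun j => W j ω) (S ω)
  /-- correctness: `W_k` is a deterministic function of the answers and `F` -/
  hCorrect : ∀ k, ∃ g : (Fin N → ZMod 2) → 𝓕 → (Fin (N - 1) → ZMod 2),
    ∀ ω, W k ω = g (fun n => A k n ω) (F ω)
  /-- user-privacy -/
  hUserPriv : ∀ (n : Fin N) (k k' : Fin K),
    IdentDist p (fun ω => (Q k n ω, A k n ω, (fun j => W j ω), S ω))
                (fun ω => (Q k' n ω, A k' n ω, (fun j => W j ω), S ω))
  /-- database-privacy -/
  hDBPriv : ∀ k : Fin K,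
    mutInfo p (fun ω => (fun j : {j : Fin K // j ≠ k} => W j.1 ω))
      (fun ω => ((fun n => Q k n ω), (fun n => A k n ω), F ω)) = 0

attribute [instance] OneBitAnswerSPIR.instΩ OneBitAnswerSPIR.inst𝓕 OneBitAnswerSPIR.inst𝓠

/-!
The user draws a uniform mask `f ∈ 𝔽₂^{K × (N-1)}`; server `0` is sent `f` and server `i + 1` is
sent `f + e_{k,i}`, and every server answers `⟨q, w⟩ + s` with the shared bit `s`. Bit `i` of
`w_k` is then the difference of answers `i + 1` and `0`. A single server cannot tell `k` apart
from `k'`, because translating the mask by `e_{k,i} - e_{k',i}` preserves the uniform measure and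
exchanges the two queries. After the measure-preserving change of variables `s ↦ s - ⟨f, w⟩`,
the user's view becomes `(f, s, s + w_k(i))`, a function of `(w_k, s, f)` only, hence
independent of the other messages.
-/

section Distributions

variable {Ω α β : Type*} [Fintype Ω]

lemma sum_prob [Fintype α] (p : Ω → ℝ) (X : Ω → α) : ∑ a, prob p X a = ∑ ω, p ω := by
  unfold prob
  rw [Finset.sum_comm]
  simp

lemma prob_congr {p : Ω → ℝ} {X : Ω → α} {Y : Ω → β} {a : α} {b : β}
    (h : ∀ ω, X ω = a ↔ Y ω = b) : prob p X a = prob p Y b := by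
  unfold prob
  simp only [h]

lemma ent_eq_sum_negMulLog [Fintype α] (p : Ω → ℝ) (X : Ω → α) :
    ent p X = (∑ a, Real.negMulLog (prob p X a)) / Real.log 2 := by
  simp only [ent, Real.negMulLog, Real.logb, Finset.sum_div, ← Finset.sum_neg_distrib]
  exact Finset.sum_congr rfl fun _ _ => by ring

lemma ent_eq_logb_card_of_unif [Fintype α] {p : Ω → ℝ} {X : Ω → α} (h : Unif p X) :
    ent p X = Real.logb 2 (Fintype.card α) := by
  have h' : ∀ a, prob p X a = 1 / (Fintype.card α : ℝ) := h
  rcases eq_or_ne (Fintype.card α) 0 with hα | hα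
  · simp [ent, Fintype.card_eq_zero_iff.mp hα]
  · simp [ent, h', Real.logb_inv, hα]

lemma mutInfo_eq_zero_of_indep [Fintype α] [Fintype β] {p : Ω → ℝ} (hp : ∑ ω, p ω = 1)
    {X : Ω → α} {Y : Ω → β}
    (h : ∀ a b, prob p (fun ω => (X ω, Y ω)) (a, b) = prob p X a * prob p Y b) :
    mutInfo p X Y = 0 := by
  have hX : ∑ a, prob p X a = 1 := (sum_prob p X).trans hp
  have hY : ∑ b, prob p Y b = 1 := (sum_prob p Y).trans hp
  have hXY : ∑ ab : α × β, Real.negMulLog (prob p (fun ω => (X ω, Y ω)) ab)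
      = ∑ a, Real.negMulLog (prob p X a) + ∑ b, Real.negMulLog (prob p Y b) := by
    simp only [Fintype.sum_prod_type, h, Real.negMulLog_mul, Finset.sum_add_distrib,
      ← Finset.sum_mul, ← Finset.mul_sum, hX, hY, one_mul]
  rw [mutInfo, ent_eq_sum_negMulLog, ent_eq_sum_negMulLog, ent_eq_sum_negMulLog, hXY]
  ring

lemma unif_of_forall_prob_eq [Fintype α] {p : Ω → ℝ} (hp : ∑ ω, p ω = 1) {X : Ω → α}
    (h : ∀ a a', prob p X a = prob p X a') : Unif p X := by
  intro a
  have hcard : (Fintype.card α : ℝ) * prob p X a = 1 := by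
    rw [← hp, ← sum_prob p X, Finset.sum_congr rfl fun a' _ => h a' a]
    simp
  rw [eq_div_iff_mul_eq (left_ne_zero_of_mul_eq_one hcard), mul_comm, hcard]

end Distributions

noncomputable def unifPmf (Ω : Type*) [Fintype Ω] : Ω → ℝ :=
  fun _ => (Fintype.card Ω : ℝ)⁻¹

section UniformPmf

variable {Ω Ω' α β : Type*} [Fintype Ω] [Fintype Ω']

lemma unifPmf_nonneg (ω : Ω) : 0 ≤ unifPmf Ω ω := by
  unfold unifPmf
  positivity

lemma sum_unifPmf [Nonempty Ω] : ∑ ω, unifPmf Ω ω = 1 := by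
  simp [unifPmf]

lemma prob_unifPmf_comp_equiv (e : Ω' ≃ Ω) (X : Ω → α) (a : α) :
    prob (unifPmf Ω') (fun ω => X (e ω)) a = prob (unifPmf Ω) X a := by
  simp only [prob, unifPmf, Fintype.card_congr e]
  exact e.sum_comp fun ω => if X ω = a then _ else 0

lemma ent_unifPmf_comp_equiv [Fintype α] (e : Ω' ≃ Ω) (X : Ω → α) :
    ent (unifPmf Ω') (fun ω => X (e ω)) = ent (unifPmf Ω) X := by
  simp only [ent, prob_unifPmf_comp_equiv]

lemma mutInfo_unifPmf_comp_equiv [Fintype α] [Fintype β] (e : Ω' ≃ Ω) (X : Ω → α)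
    (Y : Ω → β) :
    mutInfo (unifPmf Ω') (fun ω => X (e ω)) (fun ω => Y (e ω)) = mutInfo (unifPmf Ω) X Y := by
  simp only [mutInfo]
  rw [ent_unifPmf_comp_equiv e X, ent_unifPmf_comp_equiv e Y,
    ent_unifPmf_comp_equiv e fun ω => (X ω, Y ω)]

lemma identDist_unifPmf_of_equiv (e : Ω ≃ Ω) {X Y : Ω → α} (h : ∀ ω, Y (e ω) = X ω) :
    IdentDist (unifPmf Ω) X Y := by
  intro a
  rw [← prob_unifPmf_comp_equiv e Y]
  simp only [h]

lemma prob_unifPmf_id (a : Ω) : prob (unifPmf Ω) (fun ω => ω) a = (Fintype.card Ω : ℝ)⁻¹ := by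
  simp [prob, unifPmf]

lemma unif_unifPmf_of_surjective {G H : Type*} [AddGroup G] [Fintype G] [AddGroup H]
    [Fintype H] (f : G →+ H) (hf : Function.Surjective f) : Unif (unifPmf G) f := by
  have : Nonempty G := ⟨0⟩
  refine unif_of_forall_prob_eq sum_unifPmf fun a a' => ?_
  obtain ⟨g, hg⟩ := hf (-a + a')
  rw [← prob_unifPmf_comp_equiv (Equiv.addRight g) f a']
  exact prob_congr fun ω => by simp [hg, ← add_assoc, add_neg_eq_zero]

lemma prob_unifPmf_prod_mk {A B : Type*} [Fintype A] [Fintype B] (f : A → α) (g : B → β)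
    (a : α) (b : β) :
    prob (unifPmf (A × B)) (fun x => (f x.1, g x.2)) (a, b)
      = prob (unifPmf A) f a * prob (unifPmf B) g b := by
  simp only [prob, unifPmf, Fintype.card_prod, Nat.cast_mul, mul_inv, Fintype.sum_prod_type,
    Finset.sum_mul_sum, Prod.mk.injEq, ite_zero_mul_ite_zero]

lemma prob_unifPmf_prod_fst {A B : Type*} [Fintype A] [Fintype B] [Nonempty B] (f : A → α)
    (a : α) : prob (unifPmf (A × B)) (fun x => f x.1) a = prob (unifPmf A) f a := by
  rw [prob_congr (Y := fun x : A × B => (f x.1, (fun _ => ()) x.2)) (b := (a, ()))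
    (by simp), prob_unifPmf_prod_mk f (fun _ : B => ()) a ()]
  simp [prob, sum_unifPmf]

lemma prob_unifPmf_prod_snd {A B : Type*} [Fintype A] [Fintype B] [Nonempty A] (g : B → β)
    (b : β) : prob (unifPmf (A × B)) (fun x => g x.2) b = prob (unifPmf B) g b := by
  rw [prob_congr (Y := fun x : A × B => ((fun _ => ()) x.1, g x.2)) (b := ((), b))
    (by simp), prob_unifPmf_prod_mk (fun _ : A => ()) g () b]
  simp [prob, sum_unifPmf]

lemma mutInfo_unifPmf_prod_eq_zero {A B : Type*} [Fintype A] [Fintype B] [Nonempty A]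
    [Nonempty B] [Fintype α] [Fintype β] (f : A → α) (g : B → β) :
    mutInfo (unifPmf (A × B)) (fun x => f x.1) (fun x => g x.2) = 0 :=
  mutInfo_eq_zero_of_indep sum_unifPmf fun a b => by
    rw [prob_unifPmf_prod_mk, prob_unifPmf_prod_fst, prob_unifPmf_prod_snd]

end UniformPmf

namespace CapacityScheme

abbrev Msgs (K L : ℕ) := Fin K → Fin L → ZMod 2

/-- `(w, s, f)`: the messages, the common-randomness bit and the user's uniform mask. -/
abbrev Outcome (K N : ℕ) := Msgs K (N - 1) × ZMod 2 × Msgs K (N - 1)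

variable {K L N : ℕ}

def pairing (q w : Msgs K L) : ZMod 2 := ∑ j, q j ⬝ᵥ w j

/-- Server `0` is asked for no bit, server `i + 1` for bit `i`. -/
def selector (n : Fin N) : Fin (N - 1) → ZMod 2 := fun i => if (i : ℕ) + 1 = n then 1 else 0

def query (k : Fin K) (n : Fin N) (f : Msgs K (N - 1)) : Msgs K (N - 1) :=
  f + Pi.single k (selector n)

def answer (q w : Msgs K L) (s : ZMod 2) : ZMod 2 := pairing q w + s

def W (k : Fin K) (ω : Outcome K N) : Fin (N - 1) → ZMod 2 := ω.1 k

def S (ω : Outcome K N) : ZMod 2 := ω.2.1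

def F (ω : Outcome K N) : Msgs K (N - 1) := ω.2.2

def Q (k : Fin K) (n : Fin N) (ω : Outcome K N) : Msgs K (N - 1) := query k n (F ω)

def A (k : Fin K) (n : Fin N) (ω : Outcome K N) : ZMod 2 := answer (Q k n ω) ω.1 (S ω)

lemma pairing_add_left (q q' w : Msgs K L) : pairing (q + q') w = pairing q w + pairing q' w := by
  simp [pairing, add_dotProduct, Finset.sum_add_distrib]

lemma pairing_single_left (k : Fin K) (v : Fin L → ZMod 2) (w : Msgs K L) :
    pairing (Pi.single k v) w = v ⬝ᵥ w k := by
  rw [pairing, Finset.sum_eq_single k (fun j _ hj => by simp [hj]) (by simp)]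
  simp

lemma answer_query (k : Fin K) (n : Fin N) (f w : Msgs K (N - 1)) (s : ZMod 2) :
    answer (query k n f) w s = pairing f w + selector n ⬝ᵥ w k + s := by
  rw [answer, query, pairing_add_left, pairing_single_left]

lemma selector_zero (h : 0 < N) : selector (⟨0, h⟩ : Fin N) = 0 := by
  ext i
  simp [selector]

lemma selector_succ (i : Fin (N - 1)) (h : (i : ℕ) + 1 < N) :
    selector (⟨i + 1, h⟩ : Fin N) = Pi.single i 1 := by
  ext i'
  simp [selector, Pi.single_apply, Fin.ext_iff]

def decode (a : Fin N → ZMod 2) (i : Fin (N - 1)) : ZMod 2 :=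
  a ⟨i + 1, by have := i.isLt; omega⟩ - a ⟨0, by have := i.isLt; omega⟩

lemma decode_A (k : Fin K) (ω : Outcome K N) : decode (fun n => A k n ω) = W k ω := by
  ext i
  simp only [decode, A, Q, answer_query, selector_succ, selector_zero, single_dotProduct,
    zero_dotProduct]
  simp [W]

lemma unif_W (k : Fin K) : Unif (unifPmf (Outcome K N)) (W k) :=
  unif_unifPmf_of_surjective (G := Outcome K N)
    ((Pi.evalAddMonoidHom _ k).comp (AddMonoidHom.fst _ _))
    fun v => ⟨(Pi.single k v, 0), by simp⟩

lemma unif_S : Unif (unifPmf (Outcome K N)) S :=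
  unif_unifPmf_of_surjective (G := Outcome K N)
    ((AddMonoidHom.fst _ _).comp (AddMonoidHom.snd _ _))
    fun s => ⟨(0, s, 0), rfl⟩

lemma unif_F : Unif (unifPmf (Outcome K N)) F :=
  unif_unifPmf_of_surjective (G := Outcome K N)
    ((AddMonoidHom.snd _ _).comp (AddMonoidHom.snd _ _))
    fun f => ⟨(0, 0, f), rfl⟩

lemma ent_S : ent (unifPmf (Outcome K N)) S = 1 := by
  rw [ent_eq_logb_card_of_unif unif_S]
  simp

lemma prob_msgs_S_F (w : Msgs K (N - 1)) (s : ZMod 2) (f : Msgs K (N - 1)) :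
    prob (unifPmf (Outcome K N)) (fun ω => ((fun k => W k ω), S ω, F ω)) (w, s, f)
      = (∏ k, prob (unifPmf _) (W k) (w k)) * prob (unifPmf (Outcome K N)) S s
        * prob (unifPmf _) F f := by
  simp only [fun k => unif_W k (w k), unif_S s, unif_F f]
  rw [show (fun ω : Outcome K N => ((fun k => W k ω), S ω, F ω)) = fun ω => ω from rfl,
    prob_unifPmf_id]
  simp [Fintype.card_pi, mul_comm]

lemma identDist_server_view (n : Fin N) (k k' : Fin K) :
    IdentDist (unifPmf (Outcome K N)) (fun ω => (Q k n ω, A k n ω, (fun j => W j ω), S ω))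
      (fun ω => (Q k' n ω, A k' n ω, (fun j => W j ω), S ω)) := by
  let d : Outcome K N := (0, 0, Pi.single k (selector n) - Pi.single k' (selector n))
  have hQ (ω : Outcome K N) : Q k' n (ω + d) = Q k n ω := by
    simp only [Q, query, F, d, Prod.snd_add]
    abel
  exact identDist_unifPmf_of_equiv (Equiv.addRight d) fun ω => by simp [A, hQ, W, S, d]

def unmask : Outcome K N ≃ Outcome K N where
  toFun ω := (ω.1, ω.2.1 - pairing ω.2.2 ω.1, ω.2.2)
  invFun ω := (ω.1, ω.2.1 + pairing ω.2.2 ω.1, ω.2.2)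
  left_inv ω := by simp
  right_inv ω := by simp

lemma A_unmask (k : Fin K) (n : Fin N) (ω : Outcome K N) :
    A k n (unmask ω) = selector n ⬝ᵥ W k ω + S ω := by
  simp only [A, Q, F, S, W, unmask, Equiv.coe_fn_mk, answer_query]
  ring

def splitMsg (k : Fin K) :
    Outcome K N ≃ ({j // j ≠ k} → Fin (N - 1) → ZMod 2) ×
      ((Fin (N - 1) → ZMod 2) × ZMod 2 × Msgs K (N - 1)) :=
  ((Equiv.piSplitAt k _).prodCongr (Equiv.refl _)).trans
    (((Equiv.prodComm _ _).prodCongr (Equiv.refl _)).trans (Equiv.prodAssoc _ _ _))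

lemma mutInfo_otherMsgs_view (k : Fin K) :
    mutInfo (unifPmf (Outcome K N)) (fun ω => fun j : {j // j ≠ k} => W j.1 ω)
      (fun ω => ((fun n => Q k n ω), (fun n => A k n ω), F ω)) = 0 := by
  let view (x : (Fin (N - 1) → ZMod 2) × ZMod 2 × Msgs K (N - 1)) :
      (Fin N → Msgs K (N - 1)) × (Fin N → ZMod 2) × Msgs K (N - 1) :=
    (fun n => query k n x.2.2, fun n => selector n ⬝ᵥ x.1 + x.2.1, x.2.2)
  rw [← mutInfo_unifPmf_comp_equiv unmask]
  calc _ = mutInfo (unifPmf (Outcome K N)) (fun ω => (splitMsg k ω).1)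
        (fun ω => view (splitMsg k ω).2) := by
        congr 1
        funext ω
        simp only [A_unmask]
        rfl
    _ = 0 := by
      rw [mutInfo_unifPmf_comp_equiv (splitMsg k) (fun x => x.1) fun x => view x.2]
      exact mutInfo_unifPmf_prod_eq_zero (fun r => r) view

noncomputable def scheme (K N : ℕ) : OneBitAnswerSPIR K N where
  Ω := Outcome K N
  p := unifPmf _
  p_nonneg := unifPmf_nonneg
  p_sum := sum_unifPmf
  𝓕 := Msgs K (N - 1)
  𝓠 _ := Msgs K (N - 1)
  W := W
  S := S
  F := F
  Q := Q
  A := A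
  hWunif := unif_W
  hIndep := prob_msgs_S_F
  hQ k n := ⟨query k n, fun _ => rfl⟩
  hA _ _ := ⟨answer, fun _ => rfl⟩
  hCorrect k := ⟨fun a _ => decode a, fun ω => (decode_A k ω).symm⟩
  hUserPriv := identDist_server_view
  hDBPriv := mutInfo_otherMsgs_view

end CapacityScheme

theorem spir_capacity_achievability (K N : ℕ) :
    ∃ sch : OneBitAnswerSPIR K N, Unif sch.p sch.S ∧ ent sch.p sch.S = 1 :=
  ⟨CapacityScheme.scheme K N, CapacityScheme.unif_S, CapacityScheme.ent_S⟩
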